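/- arXiv:1403.6927 — 2 statements merged into one kernel-verified Lean document; each statement's English description precedes it below -/
import Mathlib

section
/- For α > 1/2, λ ≥ 0 and every n ≥ 2, the connection formula C_n^{(α-1)}(x) = Q_{n,λ}^{(α)}(x) - d_{n-2}(α) Q_{n-2,λ}^{(α)}(x) holds, where d_m(α) = ξ_m^{(α)} · ‖C_m^{(α)}‖_μ² / ‖Q_{m,λ}^{(α)}‖_S², with ξ_m^{(α)} = (m+2)(m+1)/(4(m+α+1)(m+α)), ‖C_m^{(α)}‖_μ² = ∫_{-1}^{1} [C_m^{(α)}(x)]² (1-x²)^{α-1/2} dx, and ‖Q_{m,λ}^{(α)}‖_S² = ⟨Q_{m,λ}^{(α)}, Q_{m,λ}^{(α)}⟩_S. -/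
/-!
Both `gegInner α` and the Sobolev form are positive definite and invariant under `x ↦ -x`, so
their monic orthogonal polynomials are unique and have the parity of their degree. Since
`(1-x²)^(α-1/2) = (1-x²) (1-x²)^(α-3/2)`, and integration by parts moves a derivative from the
`α`-weight to the `(α-1)`-weight, `C_n^(α-1)` and its derivative are `α`-orthogonal to all
polynomials of degree `< n-2` and `< n-1` respectively. Hence `C_n^(α-1) - Q_n`, of degree `≤ n-2`
by parity, is Sobolev-orthogonal to degree `< n-2`, so it is a multiple of `Q_{n-2}`; pairing with
`Q_{n-2}` identifies the factor as `-‖C_n^(α-1)‖²_(α-1) / ‖Q_{n-2}‖²_S`. Finally, differentiating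
`m` times gives `‖C_m^(β)‖²_β ∏_{k<m} (m+k+2β) = m! ∫ (1-x²)^(β+m-1/2)`, and comparing this for
`(β, m) = (α-1, n)` and `(α, n-2)` yields `‖C_n^(α-1)‖²_(α-1) = ξ_{n-2} ‖C_{n-2}^(α)‖²_α`.
-/

open Polynomial MeasureTheory Real Set

/-- The Gegenbauer inner product `∫ f g (1-x²)^{α-1/2}` on `(-1,1)`. -/
noncomputable def gegInner (α : ℝ) (f g : Polynomial ℝ) : ℝ :=
  ∫ x in Set.Ioo (-1 : ℝ) 1, f.eval x * g.eval x * (1 - x ^ 2) ^ (α - 1/2)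

/-- `C` is the monic Gegenbauer polynomial of degree `n` for parameter `α`. -/
def IsMonicGegenbauer (α : ℝ) (n : ℕ) (C : Polynomial ℝ) : Prop :=
  C.Monic ∧ C.natDegree = n ∧
    ∀ p : Polynomial ℝ, p.degree < (n : ℕ) → gegInner α C p = 0

/-- The Gegenbauer–Sobolev inner product. -/
noncomputable def sobInner (α lam : ℝ) (f g : Polynomial ℝ) : ℝ :=
  gegInner α f g + lam * gegInner α (derivative f) (derivative g)

/-- `Q` is the monic Gegenbauer–Sobolev polynomial of degree `n`. -/
def IsMonicGegSobolev (α lam : ℝ) (n : ℕ) (Q : Polynomial ℝ) : Prop :=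
  Q.Monic ∧ Q.natDegree = n ∧
    ∀ p : Polynomial ℝ, p.degree < (n : ℕ) → sobInner α lam Q p = 0

lemma Polynomial.coeff_comp_neg_X {R : Type*} [CommRing R] (p : R[X]) (k : ℕ) :
    (p.comp (-X)).coeff k = (-1) ^ k * p.coeff k := by
  induction p using Polynomial.induction_on' with
  | add f g hf hg => simp [add_comp, hf, hg, mul_add]
  | monomial n a =>
    rw [← C_mul_X_pow_eq_monomial, mul_comp, C_comp, X_pow_comp, neg_pow, mul_left_comm, ← C_1,
      ← C_neg, ← C_pow, coeff_C_mul, coeff_C_mul, coeff_X_pow]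
    split_ifs with h <;> simp [h]

lemma Polynomial.Monic.degree_sub_coeff_smul_lt {R : Type*} [Ring R] {P f : R[X]} {m : ℕ}
    (hP : P.Monic) (hPm : P.natDegree = m) (hf : f.natDegree ≤ m) :
    (f - f.coeff m • P).degree < m := by
  rw [degree_lt_iff_coeff_zero]
  intro k hk
  rcases hk.eq_or_lt with rfl | hk
  · simp [← hPm, hP.coeff_natDegree]
  · simp [coeff_eq_zero_of_natDegree_lt (hf.trans_lt hk),
      coeff_eq_zero_of_natDegree_lt (hPm.trans_lt hk)]

lemma Polynomial.Monic.natDegree_sub_le {R : Type*} [Ring R] {P Q : R[X]} {m : ℕ} (hP : P.Monic)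
    (hQ : Q.Monic) (hPm : P.natDegree = m + 2) (hQm : Q.natDegree = m + 2)
    (hP1 : P.coeff (m + 1) = 0) (hQ1 : Q.coeff (m + 1) = 0) : (P - Q).natDegree ≤ m := by
  rw [natDegree_le_iff_coeff_eq_zero]
  intro N hN
  rw [coeff_sub]
  rcases (by omega : N = m + 1 ∨ N = m + 2 ∨ m + 2 < N) with rfl | rfl | hN
  · rw [hP1, hQ1, sub_zero]
  · rw [← hPm, hP.coeff_natDegree, hPm, ← hQm, hQ.coeff_natDegree, sub_self]
  · rw [coeff_eq_zero_of_natDegree_lt (hPm ▸ hN), coeff_eq_zero_of_natDegree_lt (hQm ▸ hN),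
      sub_zero]

section MonicOrthogonal

variable {K : Type*} [Field K]

def IsMonicOrthogonal (B : LinearMap.BilinForm K K[X]) (m : ℕ) (P : K[X]) : Prop :=
  P.Monic ∧ P.natDegree = m ∧ ∀ p : K[X], p.degree < m → B P p = 0

variable {B : LinearMap.BilinForm K K[X]} {m : ℕ} {P : K[X]}

namespace IsMonicOrthogonal

lemma eq_coeff_smul (hB : ∀ f, B f f = 0 → f = 0) (hP : IsMonicOrthogonal B m P) {f : K[X]}
    (hf : f.natDegree ≤ m) (hf_orth : ∀ p : K[X], p.degree < m → B f p = 0) :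
    f = f.coeff m • P := by
  have hlt := hP.1.degree_sub_coeff_smul_lt hP.2.1 hf
  refine sub_eq_zero.mp (hB _ ?_)
  rw [LinearMap.map_sub₂, LinearMap.map_smul₂, hf_orth _ hlt, hP.2.2 _ hlt, smul_zero, sub_zero]

lemma unique (hB : ∀ f, B f f = 0 → f = 0) (hP : IsMonicOrthogonal B m P) {Q : K[X]}
    (hQ : IsMonicOrthogonal B m Q) : Q = P := by
  have hQm : Q.coeff m = 1 := hQ.2.1 ▸ hQ.1.coeff_natDegree
  simpa [hQm] using hP.eq_coeff_smul hB hQ.2.1.le hQ.2.2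

lemma apply_eq_coeff_mul (hP : IsMonicOrthogonal B m P) {f : K[X]} (hf : f.natDegree ≤ m) :
    B P f = f.coeff m * B P P := by
  have h := hP.2.2 _ (hP.1.degree_sub_coeff_smul_lt hP.2.1 hf)
  rwa [map_sub, map_smul, smul_eq_mul, sub_eq_zero] at h

lemma C_neg_one_pow_mul_comp_neg_X (hB : ∀ f, B f f = 0 → f = 0)
    (hB_neg : ∀ f g, B (f.comp (-X)) (g.comp (-X)) = B f g) (hP : IsMonicOrthogonal B m P) :
    C ((-1) ^ m) * P.comp (-X) = P := by
  refine hP.unique hB ⟨?_, ?_, fun p hp => ?_⟩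
  · simpa [hP.2.1] using hP.1.neg_one_pow_natDegree_mul_comp_neg_X
  · rw [natDegree_C_mul (by simp), natDegree_comp]
    simp [hP.2.1]
  · rw [← smul_eq_C_mul, LinearMap.map_smul₂,
      ← comp_neg_X_comp_neg_X p, hB_neg, hP.2.2 _ (by rwa [degree_comp_neg_X]), smul_zero]

lemma coeff_eq_zero [CharZero K] (hB : ∀ f, B f f = 0 → f = 0)
    (hB_neg : ∀ f g, B (f.comp (-X)) (g.comp (-X)) = B f g) (hP : IsMonicOrthogonal B (m + 1) P) :
    P.coeff m = 0 := by
  have h := congrArg (coeff · m) (hP.C_neg_one_pow_mul_comp_neg_X hB hB_neg)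
  rw [coeff_C_mul, coeff_comp_neg_X, ← mul_assoc, ← pow_add,
    Odd.neg_one_pow ⟨m, by ring⟩, neg_one_mul] at h
  exact self_eq_neg.mp h.symm

end IsMonicOrthogonal

end MonicOrthogonal

lemma one_sub_sq_pos_of_mem_Ioo {x : ℝ} (hx : x ∈ Ioo (-1 : ℝ) 1) : 0 < 1 - x ^ 2 := by
  nlinarith [hx.1, hx.2]

lemma integrableOn_one_sub_sq_rpow {r : ℝ} (hr : -1 < r) :
    IntegrableOn (fun x : ℝ => (1 - x ^ 2) ^ r) (Ioo (-1) 1) := by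
  have h_sub : IntegrableOn (fun x : ℝ => (1 - x) ^ r) (Ioo (-1) 1) := by
    have h := (intervalIntegral.intervalIntegrable_rpow' (a := 0) (b := 2) hr).comp_sub_left 1
    norm_num at h
    exact (intervalIntegrable_iff_integrableOn_Ioo_of_le (by norm_num)).mp h.symm
  have h_add : IntegrableOn (fun x : ℝ => (1 + x) ^ r) (Ioo (-1) 1) := by
    have h := (intervalIntegral.intervalIntegrable_rpow' (a := 0) (b := 2) hr).comp_add_left 1
    norm_num at h
    exact (intervalIntegrable_iff_integrableOn_Ioo_of_le (by norm_num)).mp h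
  refine ((integrableOn_const (C := (1 : ℝ)) (by simp)).add (h_sub.add h_add)).mono' ?_ ?_
  · exact (ContinuousOn.rpow_const (by fun_prop) fun x hx =>
      Or.inl (one_sub_sq_pos_of_mem_Ioo hx).ne').aestronglyMeasurable measurableSet_Ioo
  · refine ae_restrict_of_forall_mem measurableSet_Ioo fun x hx => ?_
    have hw := one_sub_sq_pos_of_mem_Ioo hx
    have h1 : 0 < 1 - x := by linarith [hx.2]
    have h2 : 0 < 1 + x := by linarith [hx.1]
    -- for `r < 0`, `1 - x²` dominates whichever of `1 ∓ x` is at most `1`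
    have hbound : (1 - x ^ 2) ^ r ≤ 1 ∨ (1 - x ^ 2) ^ r ≤ (1 - x) ^ r ∨
        (1 - x ^ 2) ^ r ≤ (1 + x) ^ r := by
      rcases le_or_gt 0 r with hr0 | hr0
      · exact Or.inl (rpow_le_one hw.le (by nlinarith) hr0)
      rcases le_total 0 x with hx0 | hx0
      · exact Or.inr (Or.inl (rpow_le_rpow_of_nonpos h1 (by nlinarith) hr0.le))
      · exact Or.inr (Or.inr (rpow_le_rpow_of_nonpos h2 (by nlinarith) hr0.le))
    have := rpow_nonneg h1.le r
    have := rpow_nonneg h2.le r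
    rw [norm_of_nonneg (rpow_nonneg hw.le _), Pi.add_apply, Pi.add_apply]
    rcases hbound with h | h | h <;> linarith

lemma integrableOn_gegInner_integrand {β : ℝ} (hβ : -1/2 < β) (f g : ℝ[X]) :
    IntegrableOn (fun x => f.eval x * g.eval x * (1 - x ^ 2) ^ (β - 1/2)) (Ioo (-1) 1) := by
  simpa using (integrableOn_one_sub_sq_rpow (r := β - 1/2) (by linarith)).continuousOn_mul_of_subset
    (f * g).continuous.continuousOn isCompact_Icc measurableSet_Ioo Ioo_subset_Icc_self

lemma gegInner_eq_intervalIntegral (β : ℝ) (f g : ℝ[X]) :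
    gegInner β f g = ∫ x in (-1)..1, f.eval x * g.eval x * (1 - x ^ 2) ^ (β - 1/2) := by
  rw [intervalIntegral.integral_of_le (by norm_num), integral_Ioc_eq_integral_Ioo, gegInner]

lemma gegInner_comm (β : ℝ) (f g : ℝ[X]) : gegInner β f g = gegInner β g f := by
  simp only [gegInner, mul_comm (f.eval _)]

lemma gegInner_add_left {β : ℝ} (hβ : -1/2 < β) (f₁ f₂ g : ℝ[X]) :
    gegInner β (f₁ + f₂) g = gegInner β f₁ g + gegInner β f₂ g := by
  simp only [gegInner, ← integral_add (integrableOn_gegInner_integrand hβ f₁ g)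
    (integrableOn_gegInner_integrand hβ f₂ g), eval_add, add_mul]

lemma gegInner_smul_left (β c : ℝ) (f g : ℝ[X]) :
    gegInner β (c • f) g = c * gegInner β f g := by
  simp only [gegInner, ← integral_const_mul, eval_smul, smul_eq_mul, mul_assoc]

noncomputable def gegForm {β : ℝ} (hβ : -1/2 < β) : LinearMap.BilinForm ℝ ℝ[X] :=
  LinearMap.mk₂ ℝ (gegInner β) (gegInner_add_left hβ) (gegInner_smul_left β)
    (fun f g₁ g₂ => by simp only [gegInner_comm β f, gegInner_add_left hβ])
    (fun c f g => by simp only [gegInner_comm β f, gegInner_smul_left, smul_eq_mul])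

@[simp]
lemma gegForm_apply {β : ℝ} (hβ : -1/2 < β) (f g : ℝ[X]) : gegForm hβ f g = gegInner β f g :=
  rfl

lemma gegInner_self_nonneg (β : ℝ) (f : ℝ[X]) : 0 ≤ gegInner β f f :=
  setIntegral_nonneg measurableSet_Ioo fun _ hx =>
    mul_nonneg (mul_self_nonneg _) (rpow_nonneg (one_sub_sq_pos_of_mem_Ioo hx).le _)

lemma eq_zero_of_gegInner_self_eq_zero {β : ℝ} (hβ : -1/2 < β) {f : ℝ[X]}
    (h : gegInner β f f = 0) : f = 0 := by
  have h_ae := (integral_eq_zero_iff_of_nonneg_ae (ae_restrict_of_forall_mem measurableSet_Ioo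
    fun x hx => mul_nonneg (mul_self_nonneg _) (rpow_nonneg (one_sub_sq_pos_of_mem_Ioo hx).le _))
    (integrableOn_gegInner_integrand hβ f f)).mp h
  have h_eq := Measure.eqOn_open_of_ae_eq h_ae isOpen_Ioo (ContinuousOn.mul (by fun_prop)
    (ContinuousOn.rpow_const (by fun_prop) fun x hx =>
      Or.inl (one_sub_sq_pos_of_mem_Ioo hx).ne')) continuousOn_const
  refine f.eq_zero_of_infinite_isRoot ((Ioo_infinite (by norm_num : (-1 : ℝ) < 1)).mono
    fun x hx => ?_)
  have := h_eq hx
  simpa only [Pi.zero_apply, mul_eq_zero, (rpow_pos_of_pos (one_sub_sq_pos_of_mem_Ioo hx) _).ne',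
    or_false, or_self, mem_ofPred_eq, IsRoot.def] using this

lemma gegInner_comp_neg_X (β : ℝ) (f g : ℝ[X]) :
    gegInner β (f.comp (-X)) (g.comp (-X)) = gegInner β f g := by
  simp only [gegInner_eq_intervalIntegral, eval_comp, eval_neg, eval_X]
  have h := intervalIntegral.integral_comp_neg (a := -1) (b := 1)
    (fun x => f.eval x * g.eval x * (1 - x ^ 2) ^ (β - 1/2))
  simp only [neg_neg, neg_sq] at h
  exact h

lemma gegInner_add_one (β : ℝ) (f g : ℝ[X]) :
    gegInner (β + 1) f g = gegInner β f ((1 - X ^ 2) * g) := by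
  refine setIntegral_congr_fun measurableSet_Ioo fun x hx => ?_
  simp only [eval_mul, eval_sub, eval_one, eval_pow, eval_X, show β + 1 - 1/2 = β - 1/2 + 1 by ring,
    rpow_add_one (one_sub_sq_pos_of_mem_Ioo hx).ne']
  ring

/-- `-(1-x²)^(1/2-β) · d/dx ((1-x²)^(β+1/2) g)`, the adjoint of `d/dx` from the `β`- to the
`(β+1)`-inner product (`gegInner_add_one_derivative`). -/
noncomputable def gegDerivAdjoint (β : ℝ) (g : ℝ[X]) : ℝ[X] :=
  C (2 * β + 1) * X * g - (1 - X ^ 2) * derivative g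

lemma gegInner_add_one_derivative {β : ℝ} (hβ : -1/2 < β) (f g : ℝ[X]) :
    gegInner (β + 1) (derivative f) g = gegInner β f (gegDerivAdjoint β g) := by
  set A := fun x => (derivative f).eval x * g.eval x * (1 - x ^ 2) ^ (β + 1 - 1/2)
  set B := fun x => f.eval x * (gegDerivAdjoint β g).eval x * (1 - x ^ 2) ^ (β - 1/2)
  have hderiv : ∀ x ∈ Ioo (-1 : ℝ) 1, HasDerivAt
      (fun x => f.eval x * g.eval x * (1 - x ^ 2) ^ (β + 1/2)) (A x - B x) x := by
    intro x hx
    have hw := one_sub_sq_pos_of_mem_Ioo hx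
    have h := ((f.hasDerivAt x).fun_mul (g.hasDerivAt x)).fun_mul
      (((hasDerivAt_pow 2 x).const_sub 1).rpow_const (p := β + 1/2) (Or.inl hw.ne'))
    refine h.congr_deriv ?_
    simp only [A, B, gegDerivAdjoint, eval_sub, eval_mul, eval_C, eval_X, eval_pow, eval_one,
      show β + 1 - 1/2 = β - 1/2 + 1 by ring, show β + 1/2 = β - 1/2 + 1 by ring,
      add_sub_cancel_right, rpow_add_one hw.ne']
    ring
  -- the boundary term is continuous on `[-1, 1]` and vanishes at `±1` because `β + 1/2 > 0`
  have hcont : ContinuousOn (fun x => f.eval x * g.eval x * (1 - x ^ 2) ^ (β + 1/2))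
      (Icc (-1) 1) :=
    (Continuous.mul (by fun_prop)
      (Continuous.rpow_const (by fun_prop) fun _ => Or.inr (by linarith))).continuousOn
  have hA : IntervalIntegrable A volume (-1) 1 :=
    (intervalIntegrable_iff_integrableOn_Ioo_of_le (by norm_num)).mpr
      (integrableOn_gegInner_integrand (by linarith) _ _)
  have hB : IntervalIntegrable B volume (-1) 1 :=
    (intervalIntegrable_iff_integrableOn_Ioo_of_le (by norm_num)).mpr
      (integrableOn_gegInner_integrand hβ _ _)
  have h := intervalIntegral.integral_eq_sub_of_hasDerivAt_of_le (by norm_num) hcont hderiv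
    (hA.sub hB)
  rw [intervalIntegral.integral_sub hA hB] at h
  norm_num [zero_rpow (by linarith : β + 1/2 ≠ 0)] at h
  rw [gegInner_eq_intervalIntegral, gegInner_eq_intervalIntegral]
  linarith

lemma coeff_one_sub_X_sq_mul (q : ℝ[X]) (k : ℕ) :
    ((1 - X ^ 2) * q).coeff (k + 2) = q.coeff (k + 2) - q.coeff k := by
  rw [sub_mul, one_mul, coeff_sub, coeff_X_pow_mul]

lemma degree_one_sub_X_sq_mul_lt {q : ℝ[X]} {m : ℕ} (hq : q.degree < m) :
    ((1 - X ^ 2) * q).degree < ↑(m + 2) := by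
  rw [degree_lt_iff_coeff_zero] at hq ⊢
  intro N hN
  obtain ⟨k, rfl⟩ := Nat.exists_eq_add_of_le' (le_of_add_le_right hN)
  rw [coeff_one_sub_X_sq_mul, hq _ (by omega), hq _ (by omega), sub_zero]

lemma natDegree_one_sub_X_sq_mul_le (q : ℝ[X]) :
    ((1 - X ^ 2) * q).natDegree ≤ q.natDegree + 2 := by
  refine natDegree_mul_le.trans ?_
  have : (1 - X ^ 2 : ℝ[X]).natDegree ≤ 2 := by compute_degree
  omega

lemma coeff_gegDerivAdjoint_succ (β : ℝ) (g : ℝ[X]) (k : ℕ) :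
    (gegDerivAdjoint β g).coeff (k + 1) =
      (k + 2 * β + 1) * g.coeff k - (k + 2) * g.coeff (k + 2) := by
  have hX2 : ((X : ℝ[X]) ^ 2 * derivative g).coeff (k + 1) = k * g.coeff k := by
    rw [pow_two, mul_assoc, coeff_X_mul]
    cases k with
    | zero => simp
    | succ k => rw [coeff_X_mul, coeff_derivative]; push_cast; ring
  rw [gegDerivAdjoint, coeff_sub, mul_assoc, coeff_C_mul, coeff_X_mul, sub_mul, one_mul,
    coeff_sub, hX2, coeff_derivative]
  push_cast
  ring

lemma natDegree_gegDerivAdjoint_le (β : ℝ) (g : ℝ[X]) :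
    (gegDerivAdjoint β g).natDegree ≤ g.natDegree + 1 := by
  rw [natDegree_le_iff_coeff_eq_zero]
  intro N hN
  obtain ⟨k, rfl⟩ := Nat.exists_eq_add_of_le' (by omega : 1 ≤ N)
  rw [coeff_gegDerivAdjoint_succ, coeff_eq_zero_of_natDegree_lt (by omega),
    coeff_eq_zero_of_natDegree_lt (by omega : g.natDegree < k + 2)]
  ring

lemma degree_gegDerivAdjoint_lt (β : ℝ) {q : ℝ[X]} {m : ℕ} (hq : q.degree < m) :
    (gegDerivAdjoint β q).degree < ↑(m + 1) := by
  rw [degree_lt_iff_coeff_zero] at hq ⊢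
  intro N hN
  obtain ⟨k, rfl⟩ := Nat.exists_eq_add_of_le' (le_of_add_le_right hN)
  rw [coeff_gegDerivAdjoint_succ, hq _ (by omega), hq _ (by omega)]
  ring

lemma gegInner_neg_neg (β : ℝ) (f g : ℝ[X]) : gegInner β (-f) (-g) = gegInner β f g := by
  simp only [gegInner, eval_neg, neg_mul_neg]

noncomputable def sobForm {β : ℝ} (hβ : -1/2 < β) (lam : ℝ) : LinearMap.BilinForm ℝ ℝ[X] :=
  gegForm hβ + lam • (gegForm hβ).compl₁₂ derivative derivative

@[simp]
lemma sobForm_apply {β : ℝ} (hβ : -1/2 < β) (lam : ℝ) (f g : ℝ[X]) :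
    sobForm hβ lam f g = sobInner β lam f g :=
  rfl

lemma eq_zero_of_sobInner_self_eq_zero {β lam : ℝ} (hβ : -1/2 < β) (hlam : 0 ≤ lam) {f : ℝ[X]}
    (h : sobInner β lam f f = 0) : f = 0 := by
  have := mul_nonneg hlam (gegInner_self_nonneg β (derivative f))
  exact eq_zero_of_gegInner_self_eq_zero hβ
    (le_antisymm (by rw [sobInner] at h; linarith) (gegInner_self_nonneg β f))

lemma sobInner_comp_neg_X (β lam : ℝ) (f g : ℝ[X]) :
    sobInner β lam (f.comp (-X)) (g.comp (-X)) = sobInner β lam f g := by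
  have hd (p : ℝ[X]) : derivative (p.comp (-X)) = -(derivative p).comp (-X) := by
    simp [derivative_comp]
  rw [sobInner, sobInner, hd, hd, gegInner_neg_neg, gegInner_comp_neg_X, gegInner_comp_neg_X]

lemma IsMonicGegSobolev.isMonicOrthogonal {β lam : ℝ} (hβ : -1/2 < β) {m : ℕ} {Q : ℝ[X]}
    (hQ : IsMonicGegSobolev β lam m Q) : IsMonicOrthogonal (sobForm hβ lam) m Q :=
  hQ

lemma IsMonicGegSobolev.coeff_eq_zero {β lam : ℝ} (hβ : -1/2 < β) (hlam : 0 ≤ lam) {m : ℕ}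
    {Q : ℝ[X]} (hQ : IsMonicGegSobolev β lam (m + 1) Q) : Q.coeff m = 0 :=
  (hQ.isMonicOrthogonal hβ).coeff_eq_zero
    (fun _ h => eq_zero_of_sobInner_self_eq_zero hβ hlam h) (sobInner_comp_neg_X β lam)

lemma two_mul_add_two_mul_gegInner_add_one {γ : ℝ} (hγ : -1/2 < γ) :
    (2 * γ + 2) * gegInner (γ + 1) 1 1 = (2 * γ + 1) * gegInner γ 1 1 := by
  have h_shift : gegInner (γ + 1) 1 1 = gegInner γ 1 1 - gegInner γ X X := by
    rw [gegInner_add_one, mul_one, ← gegForm_apply hγ, map_sub, gegForm_apply, gegForm_apply]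
    simp only [gegInner, eval_one, eval_mul, eval_X, one_mul, sq]
  have h_ibp : gegInner (γ + 1) 1 1 = (2 * γ + 1) * gegInner γ X X := by
    have h := gegInner_add_one_derivative hγ X 1
    rw [derivative_X] at h
    rw [h, gegDerivAdjoint, derivative_one, mul_zero, sub_zero, mul_one, ← smul_eq_C_mul,
      gegInner_comm, gegInner_smul_left]
  linear_combination (2 * γ + 1) * h_shift + h_ibp

namespace IsMonicGegenbauer

open Finset

variable {β : ℝ} {m : ℕ} {P : ℝ[X]}

lemma isMonicOrthogonal (hβ : -1/2 < β) (hP : IsMonicGegenbauer β m P) :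
    IsMonicOrthogonal (gegForm hβ) m P :=
  hP

lemma coeff_eq_zero (hβ : -1/2 < β) (hP : IsMonicGegenbauer β (m + 1) P) : P.coeff m = 0 :=
  (hP.isMonicOrthogonal hβ).coeff_eq_zero
    (fun _ h => eq_zero_of_gegInner_self_eq_zero hβ h) (gegInner_comp_neg_X β)

lemma gegInner_add_one_eq_zero (hP : IsMonicGegenbauer β (m + 2) P) {q : ℝ[X]}
    (hq : q.degree < m) : gegInner (β + 1) P q = 0 := by
  rw [gegInner_add_one]
  exact hP.2.2 _ (degree_one_sub_X_sq_mul_lt hq)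

lemma gegInner_add_one_derivative_eq_zero (hβ : -1/2 < β) (hP : IsMonicGegenbauer β (m + 1) P)
    {q : ℝ[X]} (hq : q.degree < m) : gegInner (β + 1) (derivative P) q = 0 := by
  rw [gegInner_add_one_derivative hβ]
  exact hP.2.2 _ (degree_gegDerivAdjoint_lt β hq)

lemma inv_smul_derivative (hβ : -1/2 < β) (hP : IsMonicGegenbauer β (m + 1) P) :
    IsMonicGegenbauer (β + 1) m (((m : ℝ) + 1)⁻¹ • derivative P) := by
  have hcoeff : (((m : ℝ) + 1)⁻¹ • derivative P).coeff m = 1 := by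
    rw [coeff_smul, coeff_derivative, ← hP.2.1, hP.1.coeff_natDegree, one_mul,
      smul_eq_mul, inv_mul_cancel₀ (by positivity)]
  have hdeg : (((m : ℝ) + 1)⁻¹ • derivative P).natDegree ≤ m :=
    (natDegree_smul_le _ _).trans ((natDegree_derivative_le P).trans (by rw [hP.2.1]; omega))
  refine ⟨monic_of_natDegree_le_of_coeff_eq_one m hdeg hcoeff,
    natDegree_eq_of_le_of_coeff_ne_zero hdeg (by simp [hcoeff]), fun q hq => ?_⟩
  rw [gegInner_smul_left, hP.gegInner_add_one_derivative_eq_zero hβ hq, mul_zero]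

lemma gegInner_derivative_self (hβ : -1/2 < β) (hP : IsMonicGegenbauer β (m + 1) P) :
    gegInner (β + 1) (derivative P) (derivative P) =
      (m + 1) * (m + 1 + 2 * β) * gegInner β P P := by
  have hdeg : (gegDerivAdjoint β (derivative P)).natDegree ≤ m + 1 :=
    (natDegree_gegDerivAdjoint_le β _).trans
      (by have := natDegree_derivative_le P; rw [hP.2.1] at this; omega)
  have h := (hP.isMonicOrthogonal hβ).apply_eq_coeff_mul hdeg
  rw [gegForm_apply, gegForm_apply] at h
  rw [gegInner_add_one_derivative hβ, h, coeff_gegDerivAdjoint_succ, coeff_derivative,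
    coeff_derivative, coeff_eq_zero_of_natDegree_lt (by rw [hP.2.1]; omega : P.natDegree < m + 3),
    ← hP.2.1, hP.1.coeff_natDegree]
  push_cast
  ring

lemma gegInner_self_mul_prod (hβ : -1/2 < β) (hP : IsMonicGegenbauer β m P) :
    gegInner β P P * ∏ k ∈ range m, ((m : ℝ) + k + 2 * β) = m.factorial * gegInner (β + m) 1 1 := by
  induction m generalizing β P with
  | zero => simp [hP.1.natDegree_eq_zero.mp hP.2.1]
  | succ m ih =>
    have hQ := ih (by linarith) (hP.inv_smul_derivative hβ)
    rw [gegInner_smul_left, gegInner_comm, gegInner_smul_left,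
      hP.gegInner_derivative_self hβ] at hQ
    have hprod : ∏ k ∈ range m, (((m + 1 : ℕ) : ℝ) + (k + 1 : ℕ) + 2 * β) =
        ∏ k ∈ range m, ((m : ℝ) + k + 2 * (β + 1)) :=
      prod_congr rfl fun k _ => by push_cast; ring
    rw [prod_range_succ', hprod, Nat.factorial_succ, Nat.cast_mul, mul_assoc,
      show β + ((m + 1 : ℕ) : ℝ) = β + 1 + m by push_cast; ring, ← hQ]
    field_simp
    push_cast
    ring

lemma gegInner_self_eq_mul {α : ℝ} (hα : 1/2 < α) {j : ℕ} {C C' : ℝ[X]}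
    (hC : IsMonicGegenbauer (α - 1) (j + 2) C) (hC' : IsMonicGegenbauer α j C') :
    gegInner (α - 1) C C =
      ((j : ℝ) + 2) * (j + 1) / (4 * (j + α + 1) * (j + α)) * gegInner α C' C' := by
  have hj : (0 : ℝ) ≤ j := j.cast_nonneg
  have hT := hC.gegInner_self_mul_prod (by linarith)
  have hT' := hC'.gegInner_self_mul_prod (by linarith)
  have hI := two_mul_add_two_mul_gegInner_add_one (γ := α + j) (by linarith)
  rw [prod_range_succ, prod_range_succ, Nat.factorial_succ, Nat.factorial_succ] at hT
  have hprod : ∏ k ∈ range j, (((j + 2 : ℕ) : ℝ) + k + 2 * (α - 1)) =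
      ∏ k ∈ range j, ((j : ℝ) + k + 2 * α) :=
    prod_congr rfl fun k _ => by push_cast; ring
  rw [hprod, show α - 1 + ((j + 2 : ℕ) : ℝ) = α + j + 1 by push_cast; ring] at hT
  have hprod_pos : 0 < ∏ k ∈ range j, ((j : ℝ) + k + 2 * α) :=
    prod_pos fun k _ => by positivity
  rw [div_mul_eq_mul_div, eq_div_iff (by positivity)]
  refine mul_right_cancel₀ (mul_pos hprod_pos (by linarith : (0 : ℝ) < 2 * (α + j) + 1)).ne' ?_
  push_cast at hT hT'
  linear_combination (2 * (α + j) + 2) * hT + ((j : ℝ) + 2) * (j + 1) * j.factorial * hI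
    - ((j : ℝ) + 2) * (j + 1) * (2 * (α + j) + 1) * hT'

end IsMonicGegenbauer

section Connection

variable {α lam : ℝ} {j : ℕ} {C Q Q' : ℝ[X]}

lemma IsMonicGegenbauer.sobInner_eq_zero (hα : 1/2 < α) (hC : IsMonicGegenbauer (α - 1) (j + 2) C)
    {p : ℝ[X]} (hp : p.degree < j) : sobInner α lam C p = 0 := by
  have h0 := hC.gegInner_add_one_eq_zero hp
  have h1 := hC.gegInner_add_one_derivative_eq_zero (m := j + 1) (by linarith)
    (degree_derivative_le.trans_lt (hp.trans (by exact_mod_cast j.lt_succ_self)))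
  rw [sub_add_cancel] at h0 h1
  rw [sobInner, h0, h1, mul_zero, add_zero]

lemma IsMonicGegenbauer.sobInner_eq_neg_gegInner_self (hα : 1/2 < α)
    (hC : IsMonicGegenbauer (α - 1) (j + 2) C) (hQ' : IsMonicGegSobolev α lam j Q') :
    sobInner α lam C Q' = -gegInner (α - 1) C C := by
  have hlead : Q'.coeff j = 1 := hQ'.2.1 ▸ hQ'.1.coeff_natDegree
  have h0 := (hC.isMonicOrthogonal (by linarith)).apply_eq_coeff_mul
    ((natDegree_one_sub_X_sq_mul_le Q').trans (by rw [hQ'.2.1]))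
  rw [gegForm_apply, gegForm_apply, ← gegInner_add_one, sub_add_cancel, coeff_one_sub_X_sq_mul,
    coeff_eq_zero_of_natDegree_lt (by rw [hQ'.2.1]; omega), hlead, zero_sub, neg_one_mul] at h0
  have h1 := hC.gegInner_add_one_derivative_eq_zero (m := j + 1) (by linarith)
    (q := derivative Q') ((degree_derivative_lt hQ'.1.ne_zero).trans_le
      (by rw [degree_eq_natDegree hQ'.1.ne_zero, hQ'.2.1]; exact_mod_cast j.le_succ))
  rw [sub_add_cancel] at h1
  rw [sobInner, h0, h1, mul_zero, add_zero]

theorem IsMonicGegenbauer.eq_sub_smul_of_isMonicGegSobolev (hα : 1/2 < α) (hlam : 0 ≤ lam)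
    (hC : IsMonicGegenbauer (α - 1) (j + 2) C) (hQ : IsMonicGegSobolev α lam (j + 2) Q)
    (hQ' : IsMonicGegSobolev α lam j Q') :
    C = Q - (gegInner (α - 1) C C / sobInner α lam Q' Q') • Q' := by
  have hα' : -1/2 < α := by linarith
  have hQ_orth (p : ℝ[X]) (hp : p.degree ≤ j) : sobInner α lam Q p = 0 :=
    hQ.2.2 p (hp.trans_lt (by exact_mod_cast (by omega : j < j + 2)))
  have hdeg : (C - Q).natDegree ≤ j := hC.1.natDegree_sub_le hQ.1 hC.2.1 hQ.2.1
    (hC.coeff_eq_zero (by linarith)) (hQ.coeff_eq_zero hα' hlam)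
  have hsplit := (hQ'.isMonicOrthogonal hα').eq_coeff_smul
    (fun _ h => eq_zero_of_sobInner_self_eq_zero hα' hlam h) hdeg fun p hp => by
      rw [LinearMap.map_sub₂, sobForm_apply, sobForm_apply, hC.sobInner_eq_zero hα hp,
        hQ_orth p hp.le, sub_zero]
  have hS : sobInner α lam Q' Q' ≠ 0 := fun h =>
    hQ'.1.ne_zero (eq_zero_of_sobInner_self_eq_zero hα' hlam h)
  have hc : (C - Q).coeff j = -(gegInner (α - 1) C C / sobInner α lam Q' Q') := by
    have h := congrArg (fun f => sobForm hα' lam f Q') hsplit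
    simp only [LinearMap.map_sub₂, LinearMap.map_smul₂, sobForm_apply, smul_eq_mul,
      hC.sobInner_eq_neg_gegInner_self hα hQ',
      hQ_orth Q' (degree_le_of_natDegree_le hQ'.2.1.le)] at h
    field_simp
    linarith
  rw [hc, neg_smul] at hsplit
  linear_combination hsplit

end Connection

/-- Connection formula between monic Gegenbauer and Gegenbauer–Sobolev polynomials. -/
theorem gegSobolev_connection_formula (α lam : ℝ) (hα : 1/2 < α) (hlam : 0 ≤ lam)
    (n : ℕ) (hn : 2 ≤ n)
    (Cm Cnm2 Qn Qnm2 : Polynomial ℝ)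
    (h1 : IsMonicGegenbauer (α - 1) n Cm)
    (h2 : IsMonicGegenbauer α (n - 2) Cnm2)
    (h3 : IsMonicGegSobolev α lam n Qn)
    (h4 : IsMonicGegSobolev α lam (n - 2) Qnm2) :
    ∀ x : ℝ, Cm.eval x =
      Qn.eval x -
        ((((n : ℝ) - 2) + 2) * (((n : ℝ) - 2) + 1) /
              (4 * (((n : ℝ) - 2) + α + 1) * (((n : ℝ) - 2) + α)) *
            gegInner α Cnm2 Cnm2 / sobInner α lam Qnm2 Qnm2) * Qnm2.eval x := by
  obtain ⟨j, rfl⟩ := Nat.exists_eq_add_of_le' hn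
  rw [Nat.add_sub_cancel] at h2 h4
  have hconn := h1.eq_sub_smul_of_isMonicGegSobolev hα hlam h3 h4
  rw [h1.gegInner_self_eq_mul hα h2] at hconn
  intro x
  rw [hconn, show ((j + 2 : ℕ) : ℝ) - 2 = j by push_cast; ring]
  simp only [eval_sub, eval_smul, smul_eq_mul]
end

section
/- Let μ₀ and μ₁ be compactly supported finite positive Borel measures on ℝ such that the Sobolev inner product ⟨f,g⟩ = ∫ f g dμ₀ + ∫ f' g' dμ₁ is positive definite on real polynomials, and let Q_n be the monic real polynomial of degree n ≥ 1 orthogonal with respect to ⟨·,·⟩ to all real polynomials of degree less than n. If there exists a constant C ≥ 0 such that ‖x·p(x)‖ ≤ C‖p‖ for every real polynomial p, where ‖f‖ = ⟨f,f⟩^{1/2}, then every complex zero z of Q_n satisfies |z| ≤ C. -/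
open Polynomial MeasureTheory Real Set

/-- The Sobolev inner product associated to a pair of measures `(μ₀, μ₁)`. -/
noncomputable def sobInnerM (μ₀ μ₁ : Measure ℝ) (f g : Polynomial ℝ) : ℝ :=
  (∫ x, f.eval x * g.eval x ∂μ₀) +
    ∫ x, (derivative f).eval x * (derivative g).eval x ∂μ₁

/-!
Over `ℂ` write `Q = (X - z) H` and split `H = u + i v` with `u v : ℝ[X]` of degree
`< n`. With `z = a + b i`, comparing real and imaginary parts gives `X u = Q + a u - b v`
and `X v = b u + a v`. As `Q` is orthogonal to `u` and `v`, this yields the Pythagorean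
identity `‖X u‖² + ‖X v‖² = ‖Q‖² + |z|² (‖u‖² + ‖v‖²)`, so `‖X p‖ ≤ C ‖p‖` forces
`|z| ≤ C`.
-/

theorem Continuous.integrable_of_measure_compl_eq_zero {α E : Type*} [TopologicalSpace α]
    [T2Space α] [MeasurableSpace α] [OpensMeasurableSpace α] [NormedAddCommGroup E]
    {μ : Measure α} [IsFiniteMeasureOnCompacts μ] {f : α → E} (hf : Continuous f)
    {K : Set α} (hK : IsCompact K) (hK0 : μ Kᶜ = 0) : Integrable f μ := by
  have h := hf.continuousOn.integrableOn_compact (μ := μ) hK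
  rwa [IntegrableOn, Measure.restrict_eq_self_of_ae_mem (ae_iff.mpr hK0)] at h

section SobolevForm

variable (μ₀ μ₁ : Measure ℝ)

theorem sobInnerM_comm (f g : ℝ[X]) : sobInnerM μ₀ μ₁ f g = sobInnerM μ₀ μ₁ g f := by
  simp only [sobInnerM, mul_comm]

theorem sobInnerM_self_nonneg (p : ℝ[X]) : 0 ≤ sobInnerM μ₀ μ₁ p p :=
  add_nonneg (integral_nonneg fun _ => mul_self_nonneg _)
    (integral_nonneg fun _ => mul_self_nonneg _)

theorem sobInnerM_smul_left (c : ℝ) (f g : ℝ[X]) :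
    sobInnerM μ₀ μ₁ (c • f) g = c * sobInnerM μ₀ μ₁ f g := by
  simp only [sobInnerM, derivative_smul, eval_smul, smul_eq_mul, mul_assoc, integral_const_mul,
    mul_add]

variable [IsFiniteMeasureOnCompacts μ₀] [IsFiniteMeasureOnCompacts μ₁]

theorem sobInnerM_add_left (hc0 : ∃ K : Set ℝ, IsCompact K ∧ μ₀ Kᶜ = 0)
    (hc1 : ∃ K : Set ℝ, IsCompact K ∧ μ₁ Kᶜ = 0) (f f' g : ℝ[X]) :
    sobInnerM μ₀ μ₁ (f + f') g = sobInnerM μ₀ μ₁ f g + sobInnerM μ₀ μ₁ f' g := by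
  obtain ⟨K₀, hK₀, hμ₀⟩ := hc0
  obtain ⟨K₁, hK₁, hμ₁⟩ := hc1
  have integrable₀ (p q : ℝ[X]) : Integrable (fun x => p.eval x * q.eval x) μ₀ :=
    (p.continuous.mul q.continuous).integrable_of_measure_compl_eq_zero hK₀ hμ₀
  have integrable₁ (p q : ℝ[X]) : Integrable (fun x => p.eval x * q.eval x) μ₁ :=
    (p.continuous.mul q.continuous).integrable_of_measure_compl_eq_zero hK₁ hμ₁
  simp only [sobInnerM, derivative_add, eval_add, add_mul]
  rw [integral_add (integrable₀ f g) (integrable₀ f' g),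
    integral_add (integrable₁ _ _) (integrable₁ _ _)]
  ring

noncomputable def sobolevForm (hc0 : ∃ K : Set ℝ, IsCompact K ∧ μ₀ Kᶜ = 0)
    (hc1 : ∃ K : Set ℝ, IsCompact K ∧ μ₁ Kᶜ = 0) : LinearMap.BilinForm ℝ ℝ[X] :=
  LinearMap.mk₂ ℝ (sobInnerM μ₀ μ₁) (sobInnerM_add_left μ₀ μ₁ hc0 hc1)
    (sobInnerM_smul_left μ₀ μ₁)
    (fun f g g' => by
      rw [sobInnerM_comm, sobInnerM_add_left μ₀ μ₁ hc0 hc1, sobInnerM_comm,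
        sobInnerM_comm _ _ g'])
    (fun c f g => by rw [sobInnerM_comm, sobInnerM_smul_left, sobInnerM_comm]; rfl)

theorem sobolevForm_isSymm (hc0 : ∃ K : Set ℝ, IsCompact K ∧ μ₀ Kᶜ = 0)
    (hc1 : ∃ K : Set ℝ, IsCompact K ∧ μ₁ Kᶜ = 0) : (sobolevForm μ₀ μ₁ hc0 hc1).IsSymm :=
  ⟨sobInnerM_comm μ₀ μ₁⟩

end SobolevForm

namespace LinearMap.BilinForm

variable {V : Type*} [AddCommGroup V] [Module ℝ V] {B : LinearMap.BilinForm ℝ V}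

theorem IsSymm.sq_add_sq_le_of_apply_eq_add_orthogonal (hB : B.IsSymm)
    (hnonneg : ∀ x, 0 ≤ B x x) (hdef : ∀ x, B x x = 0 → x = 0)
    {T : V → V} {c : ℝ} (hT : ∀ x, B (T x) (T x) ≤ c ^ 2 * B x x) {q u v : V} {a b : ℝ}
    (hu : T u = q + a • u - b • v) (hv : T v = b • u + a • v)
    (hqu : B q u = 0) (hqv : B q v = 0) (huv : u ≠ 0 ∨ v ≠ 0) :
    a ^ 2 + b ^ 2 ≤ c ^ 2 := by
  have hpos : 0 < B u u + B v v := by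
    rcases huv with hu0 | hv0
    · exact add_pos_of_pos_of_nonneg ((hnonneg u).lt_of_ne' (mt (hdef u) hu0)) (hnonneg v)
    · exact add_pos_of_nonneg_of_pos (hnonneg u) ((hnonneg v).lt_of_ne' (mt (hdef v) hv0))
  have hpythagoras :
      B (T u) (T u) + B (T v) (T v) = B q q + (a ^ 2 + b ^ 2) * (B u u + B v v) := by
    simp only [hu, hv, map_add, map_sub, map_smul,
      LinearMap.add_apply, LinearMap.sub_apply, LinearMap.smul_apply, smul_eq_mul]
    rw [hB.eq u q, hB.eq v q, hB.eq v u, hqu, hqv]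
    ring
  refine le_of_mul_le_mul_right ?_ hpos
  calc (a ^ 2 + b ^ 2) * (B u u + B v v)
      ≤ B q q + (a ^ 2 + b ^ 2) * (B u u + B v v) := le_add_of_nonneg_left (hnonneg q)
    _ = B (T u) (T u) + B (T v) (T v) := hpythagoras.symm
    _ ≤ c ^ 2 * (B u u + B v v) := by linarith [hT u, hT v]

end LinearMap.BilinForm

namespace Polynomial

noncomputable def rePart (H : ℂ[X]) : ℝ[X] := H.sum fun n a => monomial n a.re

noncomputable def imPart (H : ℂ[X]) : ℝ[X] := H.sum fun n a => monomial n a.im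

@[simp]
theorem coeff_rePart (H : ℂ[X]) (n : ℕ) : H.rePart.coeff n = (H.coeff n).re := by
  simp +contextual [rePart, sum_def, coeff_monomial]

@[simp]
theorem coeff_imPart (H : ℂ[X]) (n : ℕ) : H.imPart.coeff n = (H.coeff n).im := by
  simp +contextual [imPart, sum_def, coeff_monomial]

theorem degree_rePart_le (H : ℂ[X]) : H.rePart.degree ≤ H.degree :=
  (degree_le_iff_coeff_zero _ _).mpr fun _ hm => by simp [coeff_eq_zero_of_degree_lt hm]

theorem degree_imPart_le (H : ℂ[X]) : H.imPart.degree ≤ H.degree :=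
  (degree_le_iff_coeff_zero _ _).mpr fun _ hm => by simp [coeff_eq_zero_of_degree_lt hm]

theorem map_rePart_add_I_mul_map_imPart (H : ℂ[X]) :
    H.rePart.map (algebraMap ℝ ℂ) + C Complex.I * H.imPart.map (algebraMap ℝ ℂ) = H := by
  ext n
  simp [Complex.ext_iff]

theorem eq_and_eq_of_map_add_I_mul_map_eq {p q p' q' : ℝ[X]}
    (h : p.map (algebraMap ℝ ℂ) + C Complex.I * q.map (algebraMap ℝ ℂ) =
      p'.map (algebraMap ℝ ℂ) + C Complex.I * q'.map (algebraMap ℝ ℂ)) :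
    p = p' ∧ q = q' := by
  have hcoeff (n : ℕ) : p.coeff n = p'.coeff n ∧ q.coeff n = q'.coeff n := by
    simpa [Complex.ext_iff] using congrArg (coeff · n) h
  exact ⟨ext fun n => (hcoeff n).1, ext fun n => (hcoeff n).2⟩

theorem exists_X_mul_eq_of_aeval_eq_zero {Q : ℝ[X]} (hQ : Q ≠ 0) {z : ℂ}
    (hz : aeval z Q = 0) :
    ∃ u v : ℝ[X], u.degree < Q.natDegree ∧ v.degree < Q.natDegree ∧ (u ≠ 0 ∨ v ≠ 0) ∧
      X * u = Q + z.re • u - z.im • v ∧ X * v = z.im • u + z.re • v := by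
  set H := Q.map (algebraMap ℝ ℂ) /ₘ (X - C z)
  have hQH : (X - C z) * H = Q.map (algebraMap ℝ ℂ) :=
    mul_divByMonic_eq_iff_isRoot.mpr (by rwa [IsRoot, eval_map_algebraMap])
  have hQmap : Q.map (algebraMap ℝ ℂ) ≠ 0 := Polynomial.map_ne_zero hQ
  have hHdeg : H.degree < Q.natDegree := by
    rw [← degree_eq_natDegree hQ, ← degree_map Q (algebraMap ℝ ℂ)]
    exact degree_divByMonic_lt _ _ hQmap (by rw [degree_X_sub_C]; exact zero_lt_one)
  refine ⟨H.rePart, H.imPart, (degree_rePart_le H).trans_lt hHdeg,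
    (degree_imPart_le H).trans_lt hHdeg, ?_, ?_⟩
  · by_contra! h
    rw [← map_rePart_add_I_mul_map_imPart H, h.1, h.2] at hQH
    simp only [Polynomial.map_zero, mul_zero, add_zero] at hQH
    exact hQmap hQH.symm
  · have hC : (C z : ℂ[X]) = C (z.re : ℂ) + C (z.im : ℂ) * C Complex.I := by
      rw [← C_mul, ← C_add, Complex.re_add_im]
    have hI : (C Complex.I : ℂ[X]) * C Complex.I = -1 := by
      rw [← C_mul, Complex.I_mul_I, map_neg, map_one]
    have hsplit : Q.map (algebraMap ℝ ℂ) + C Complex.I * (0 : ℝ[X]).map (algebraMap ℝ ℂ) =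
        ((X - C z.re) * H.rePart + C z.im * H.imPart).map (algebraMap ℝ ℂ) +
          C Complex.I *
            ((X - C z.re) * H.imPart - C z.im * H.rePart).map (algebraMap ℝ ℂ) := by
      rw [Polynomial.map_zero, mul_zero, add_zero, ← hQH]
      nth_rewrite 1 [← map_rePart_add_I_mul_map_imPart H]
      simp only [Polynomial.map_add, Polynomial.map_sub, Polynomial.map_mul, map_X, map_C, hC]
      linear_combination (-(C (z.im : ℂ) * H.imPart.map (algebraMap ℝ ℂ))) * hI
    obtain ⟨hre, him⟩ := eq_and_eq_of_map_add_I_mul_map_eq hsplit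
    simp only [smul_eq_C_mul]
    constructor
    · linear_combination -hre
    · linear_combination -him

end Polynomial

theorem sobolev_zeros_in_disc_general (μ₀ μ₁ : Measure ℝ)
    [IsFiniteMeasure μ₀] [IsFiniteMeasure μ₁]
    (hc0 : ∃ K : Set ℝ, IsCompact K ∧ μ₀ Kᶜ = 0)
    (hc1 : ∃ K : Set ℝ, IsCompact K ∧ μ₁ Kᶜ = 0)
    (hposdef : ∀ p : Polynomial ℝ, sobInnerM μ₀ μ₁ p p = 0 → p = 0)
    (n : ℕ) (Q : Polynomial ℝ)
    (hQmonic : Q.Monic) (hQdeg : Q.natDegree = n)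
    (hQorth : ∀ p : Polynomial ℝ, p.degree < (n : ℕ) → sobInnerM μ₀ μ₁ Q p = 0)
    (Cb : ℝ) (hCb : 0 ≤ Cb)
    (hbound : ∀ p : Polynomial ℝ,
      Real.sqrt (sobInnerM μ₀ μ₁ (X * p) (X * p)) ≤
        Cb * Real.sqrt (sobInnerM μ₀ μ₁ p p)) :
    ∀ z : ℂ, Polynomial.aeval z Q = 0 → ‖z‖ ≤ Cb := by
  intro z hz
  obtain ⟨u, v, hu, hv, huv, hXu, hXv⟩ := exists_X_mul_eq_of_aeval_eq_zero hQmonic.ne_zero hz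
  rw [hQdeg] at hu hv
  have hbound_sq (p : ℝ[X]) :
      sobInnerM μ₀ μ₁ (X * p) (X * p) ≤ Cb ^ 2 * sobInnerM μ₀ μ₁ p p := by
    have h := pow_le_pow_left₀ (sqrt_nonneg _) (hbound p) 2
    rwa [mul_pow, sq_sqrt (sobInnerM_self_nonneg μ₀ μ₁ _),
      sq_sqrt (sobInnerM_self_nonneg μ₀ μ₁ _)] at h
  have hre_im : z.re ^ 2 + z.im ^ 2 ≤ Cb ^ 2 :=
    (sobolevForm_isSymm μ₀ μ₁ hc0 hc1).sq_add_sq_le_of_apply_eq_add_orthogonal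
      (sobInnerM_self_nonneg μ₀ μ₁) hposdef hbound_sq hXu hXv (hQorth u hu) (hQorth v hv) huv
  rw [← pow_le_pow_iff_left₀ (norm_nonneg z) hCb two_ne_zero, Complex.sq_norm,
    Complex.normSq_apply]
  simpa [sq] using hre_im

/-- If the multiplication operator is bounded by `C` for the Sobolev inner product,
then all (complex) zeros of the Sobolev orthogonal polynomials lie in the disc of
radius `C`. -/
theorem sobolev_zeros_in_disc (μ₀ μ₁ : Measure ℝ)
    [IsFiniteMeasure μ₀] [IsFiniteMeasure μ₁]
    (hc0 : ∃ K : Set ℝ, IsCompact K ∧ μ₀ Kᶜ = 0)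
    (hc1 : ∃ K : Set ℝ, IsCompact K ∧ μ₁ Kᶜ = 0)
    (hposdef : ∀ p : Polynomial ℝ, sobInnerM μ₀ μ₁ p p = 0 → p = 0)
    (n : ℕ) (hn : 1 ≤ n) (Q : Polynomial ℝ)
    (hQmonic : Q.Monic) (hQdeg : Q.natDegree = n)
    (hQorth : ∀ p : Polynomial ℝ, p.degree < (n : ℕ) → sobInnerM μ₀ μ₁ Q p = 0)
    (Cb : ℝ) (hCb : 0 ≤ Cb)
    (hbound : ∀ p : Polynomial ℝ,
      Real.sqrt (sobInnerM μ₀ μ₁ (X * p) (X * p)) ≤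
        Cb * Real.sqrt (sobInnerM μ₀ μ₁ p p)) :
    ∀ z : ℂ, Polynomial.aeval z Q = 0 → ‖z‖ ≤ Cb :=
  sobolev_zeros_in_disc_general μ₀ μ₁ hc0 hc1 hposdef n Q hQmonic hQdeg hQorth Cb hCb hbound
end
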